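/- arXiv:2202.02724 — 2 statements merged into one kernel-verified Lean document; each statement's English description precedes it below -/
import Mathlib

section
/- Failure of the global unique continuation property on the lattice: Let d ≥ 1, h > 0, s ∈ (0,1), and let X ⊂ (hℤ)^d be a finite set of cardinality M ∈ ℕ. Then there exists a function u ∈ ℓ_s, not identically zero (and which may be taken finitely supported), such that u_j = 0 and (−Δ_d)^s u_j = 0 for every j with hj ∈ X. -/
open scoped BigOperators
open MeasureTheory

/-- Modified Bessel function of the first kind of integer order `k`. -/
noncomputable def besselI (k : ℤ) (t : ℝ) : ℝ :=
  ∑' ℓ : ℕ, (t / 2) ^ (2 * ℓ + k.natAbs) /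
    ((Nat.factorial ℓ : ℝ) * Real.Gamma ((ℓ : ℝ) + (k.natAbs : ℝ) + 1))

/-- Semidiscrete heat kernel `G(m,t) = e^{-2dt} ∏ I_{m_i}(2t)` on `ℤ^d`. -/
noncomputable def heatG (d : ℕ) (m : Fin d → ℤ) (t : ℝ) : ℝ :=
  Real.exp (-(2 * (d : ℝ) * t)) * ∏ i, besselI (m i) (2 * t)

/-- The discrete kernel `K_s^h(m)`, with `K_s^h(0) = 0`. -/
noncomputable def Ksh (d : ℕ) (h s : ℝ) (m : Fin d → ℤ) : ℝ :=
  if m = 0 then 0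
  else h ^ (-(2 * s)) * |Real.Gamma (-s)|⁻¹ *
    ∫ t in Set.Ioi (0 : ℝ), heatG d m t / t ^ (1 + s)

/-- Membership in the space `ℓ_s`. -/
def memLs (d : ℕ) (s : ℝ) (u : (Fin d → ℤ) → ℝ) : Prop :=
  Summable fun m : Fin d → ℤ =>
    |u m| * (1 + Real.sqrt (∑ i, ((m i : ℝ)) ^ 2)) ^ (-((d : ℝ) + 2 * s))

/-- The fractional discrete Laplacian `(-Δ_d)^s u_j = ∑_{m} (u_j - u_m) K_s^h(j-m)`
(the `m = j` term vanishes since `K_s^h(0) = 0`). -/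
noncomputable def fracLap (d : ℕ) (h s : ℝ) (u : (Fin d → ℤ) → ℝ) (j : Fin d → ℤ) : ℝ :=
  ∑' m : Fin d → ℤ, (u j - u m) * Ksh d h s (j - m)

/-- Failure of the global unique continuation property on the lattice:
for any finite set `X ⊂ (hℤ)^d` of cardinality `M` there is a nontrivial, finitely supported
`u ∈ ℓ_s` with `u = 0 = (-Δ_d)^s u` on `X`. -/
theorem failure_global_UCP (d : ℕ) (hd : 1 ≤ d) (h s : ℝ) (hh : 0 < h)
    (hs : s ∈ Set.Ioo (0 : ℝ) 1) (X : Finset (Fin d → ℤ)) (M : ℕ) (hX : X.card = M) :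
    ∃ u : (Fin d → ℤ) → ℝ, u ≠ 0 ∧ (Function.support u).Finite ∧ memLs d s u ∧
      ∀ j ∈ X, u j = 0 ∧ fracLap d h s u j = 0 := by
  haveI : Nonempty (Fin d) := ⟨⟨0, hd⟩⟩
  -- find a superset T of X with card M + (M+1)
  obtain ⟨T, hXT, hT⟩ := Infinite.exists_superset_card_eq X (M + (M + 1)) (by omega)
  set S : Finset (Fin d → ℤ) := T \ X with hS
  have hScard : S.card = M + 1 := by
    rw [hS, Finset.card_sdiff_of_subset hXT, hT, hX]; omega
  have hSX : ∀ m ∈ S, m ∉ X := fun m hm => (Finset.mem_sdiff.mp hm).2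
  -- linear map from functions on S to functions on X
  let A : Matrix X S ℝ := fun j m => Ksh d h s ((j : Fin d → ℤ) - m)
  have hne : ¬ Function.Injective A.mulVecLin := by
    intro hinj
    have := LinearMap.finrank_le_finrank_of_injective hinj
    rw [Module.finrank_pi, Module.finrank_pi, Fintype.card_coe, Fintype.card_coe,
      hScard, hX] at this
    omega
  rw [Function.not_injective_iff] at hne
  obtain ⟨a, b, hab, hne⟩ := hne
  set v : S → ℝ := a - b with hv
  have hv0 : v ≠ 0 := sub_ne_zero.mpr hne
  have hAv : A.mulVec v = 0 := by
    have : A.mulVecLin v = 0 := by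
      rw [hv, map_sub, hab, sub_self]
    simpa using this
  -- build u
  classical
  set u : (Fin d → ℤ) → ℝ := fun m => if hm : m ∈ S then v ⟨m, hm⟩ else 0 with hu
  have hu_zero : ∀ m ∉ S, u m = 0 := fun m hm => dif_neg hm
  refine ⟨u, ?_, ?_, ?_, ?_⟩
  · intro h0
    apply hv0
    funext m
    have := congrFun h0 m.1
    simpa [hu, m.2] using this
  · apply Set.Finite.subset S.finite_toSet
    intro m hm
    by_contra hmS
    exact hm (hu_zero m hmS)
  · apply summable_of_ne_finset_zero (s := S)
    intro m hm
    rw [hu_zero m hm, abs_zero, zero_mul]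
  · intro j hj
    have hjS : j ∉ S := fun hjS => hSX j hjS hj
    have huj : u j = 0 := hu_zero j hjS
    refine ⟨huj, ?_⟩
    unfold fracLap
    rw [tsum_eq_sum (s := S) (by
      intro m hm
      rw [huj, hu_zero m hm, sub_zero, zero_mul])]
    have : ∑ m ∈ S, (u j - u m) * Ksh d h s (j - m)
        = - A.mulVec v ⟨j, hj⟩ := by
      rw [Matrix.mulVec, dotProduct]
      rw [← Finset.sum_attach S fun m => (u j - u m) * Ksh d h s (j - m), ← Finset.sum_neg_distrib]
      apply Finset.sum_congr rfl
      intro m _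
      rw [huj, hu]
      simp [A, m.2]
      ring
    rw [this, hAv]
    simp
end

section
/- Beta-type integral bound: Let α ≥ 0, β > α + 1 and B > 0. Then ∫_0^1 A^α (1−A)^α / (A+B)^β dA ≤ (Γ(α+1) Γ(β−α−1)/Γ(β)) · B^{−(β−α−1)}. -/
open MeasureTheory

/-- Real Beta integral. -/
lemma real_beta_integral {u v : ℝ} (hu : 0 < u) (hv : 0 < v) :
    ∫ x in Set.Ioo (0:ℝ) 1, x ^ (u - 1) * (1 - x) ^ (v - 1) =
      Real.Gamma u * Real.Gamma v / Real.Gamma (u + v) := by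
  have key := Complex.Gamma_mul_Gamma_eq_betaIntegral
    (s := (u : ℂ)) (t := (v : ℂ)) (by simpa using hu) (by simpa using hv)
  have hbeta : Complex.betaIntegral (u : ℂ) (v : ℂ) =
      ((∫ x in Set.Ioo (0:ℝ) 1, x ^ (u - 1) * (1 - x) ^ (v - 1) : ℝ) : ℂ) := by
    rw [Complex.betaIntegral]
    rw [intervalIntegral.integral_of_le zero_le_one]
    rw [← integral_Ioc_eq_integral_Ioo,
      show ((∫ t in Set.Ioc (0:ℝ) 1, t ^ (u-1) * (1-t) ^ (v-1) : ℝ) : ℂ)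
        = ∫ t in Set.Ioc (0:ℝ) 1, ((t ^ (u-1) * (1-t) ^ (v-1) : ℝ) : ℂ) from integral_ofReal.symm]
    refine setIntegral_congr_fun measurableSet_Ioc fun x hx => ?_
    have hx0 : (0:ℝ) ≤ x := le_of_lt hx.1
    have hx1 : (0:ℝ) ≤ 1 - x := by linarith [hx.2]
    rw [Complex.ofReal_mul, Complex.ofReal_cpow hx0, Complex.ofReal_cpow hx1]
    push_cast
    ring
  rw [hbeta, ← Complex.ofReal_add u v] at key
  rw [Complex.Gamma_ofReal, Complex.Gamma_ofReal, Complex.Gamma_ofReal] at key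
  have key2 : Real.Gamma u * Real.Gamma v =
      Real.Gamma (u + v) * ∫ x in Set.Ioo (0:ℝ) 1, x ^ (u - 1) * (1 - x) ^ (v - 1) := by
    exact_mod_cast key
  have hG : Real.Gamma (u + v) ≠ 0 := (Real.Gamma_pos_of_pos (by linarith)).ne'
  rw [key2]
  field_simp


/-- Beta-type integral bound: for `α ≥ 0`, `β > α + 1` and `B > 0`,
`∫_0^1 A^α (1-A)^α / (A+B)^β dA ≤ (Γ(α+1) Γ(β-α-1)/Γ(β)) B^{-(β-α-1)}`. -/
theorem beta_type_integral_bound (α β B : ℝ) (hα : 0 ≤ α) (hβ : α + 1 < β) (hB : 0 < B) :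
    (∫ A in Set.Ioo (0 : ℝ) 1, A ^ α * (1 - A) ^ α / (A + B) ^ β) ≤
      Real.Gamma (α + 1) * Real.Gamma (β - α - 1) / Real.Gamma β * B ^ (-(β - α - 1)) := by
  set g : ℝ → ℝ := fun A => A ^ α * (A + B) ^ (-β) with hg_def
  set f : ℝ → ℝ := fun x => B * x / (1 - x) with hf_def
  set f' : ℝ → ℝ := fun x => B / (1 - x) ^ 2 with hf'_def
  have hs : MeasurableSet (Set.Ioo (0:ℝ) 1) := measurableSet_Ioo
  -- derivative
  have hderiv : ∀ x ∈ Set.Ioo (0:ℝ) 1, HasDerivWithinAt f (f' x) (Set.Ioo (0:ℝ) 1) x := by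
    intro x hx
    have h1x : (1:ℝ) - x ≠ 0 := by have := hx.2; intro h; linarith
    have h0 : HasDerivAt f ((B * 1 * (1 - id x) - B * id x * (-1)) / (1 - id x) ^ 2) x :=
      ((hasDerivAt_id x).const_mul B).div ((hasDerivAt_id x).const_sub 1) h1x
    have heq : (B * 1 * (1 - id x) - B * id x * (-1)) / (1 - id x) ^ 2 = f' x := by
      simp only [id_eq, hf'_def]; field_simp; ring
    rw [heq] at h0
    exact h0.hasDerivWithinAt
  -- injectivity
  have hinj : Set.InjOn f (Set.Ioo (0:ℝ) 1) := by
    intro a ha b hb hab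
    have h1a : (0:ℝ) < 1 - a := by linarith [ha.2]
    have h1b : (0:ℝ) < 1 - b := by linarith [hb.2]
    rw [hf_def] at hab
    field_simp at hab
    nlinarith
  -- image
  have himg : f '' Set.Ioo (0:ℝ) 1 = Set.Ioi (0:ℝ) := by
    ext y
    constructor
    · rintro ⟨x, hx, rfl⟩
      have h1x : (0:ℝ) < 1 - x := by linarith [hx.2]
      exact Set.mem_Ioi.mpr (div_pos (mul_pos hB hx.1) h1x)
    · intro hy
      refine ⟨y / (y + B), ⟨div_pos hy (by linarith [Set.mem_Ioi.mp hy]), ?_⟩, ?_⟩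
      · rw [div_lt_one (by linarith [Set.mem_Ioi.mp hy])]; linarith
      · have hyB : y + B ≠ 0 := by have := Set.mem_Ioi.mp hy; positivity
        rw [hf_def]
        field_simp
        rw [add_sub_cancel_left, mul_div_cancel_left₀ _ hB.ne']
  have hβ2 : (-1:ℝ) < β - α - 2 := by linarith
  -- pointwise identity for the transformed integrand
  have hpt : Set.EqOn (fun x => |f' x| • g (f x))
      (fun x => B ^ (α + 1 - β) * (x ^ (α + 1 - 1) * (1 - x) ^ (β - α - 1 - 1)))
      (Set.Ioo (0:ℝ) 1) := by
    intro x hx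
    have hx0 : (0:ℝ) < x := hx.1
    have h1x : (0:ℝ) < 1 - x := by linarith [hx.2]
    have hfx : f x + B = B / (1 - x) := by rw [hf_def]; field_simp; ring
    have e0 : |f' x| = B / (1 - x) ^ 2 := abs_of_pos (div_pos hB (pow_pos h1x 2))
    have e1 : (f x) ^ α = B ^ α * x ^ α / (1 - x) ^ α := by
      rw [hf_def]
      simp only
      rw [Real.div_rpow (mul_nonneg hB.le hx0.le) h1x.le, Real.mul_rpow hB.le hx0.le]
    have e2 : (B / (1 - x)) ^ (-β) = (B ^ β)⁻¹ * (1 - x) ^ β := by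
      rw [Real.div_rpow hB.le h1x.le, Real.rpow_neg hB.le, Real.rpow_neg h1x.le]
      field_simp
    have hBrw : B ^ (α + 1 - β) = B * B ^ α * (B ^ β)⁻¹ := by
      rw [show α + 1 - β = 1 + α + (-β) by ring, Real.rpow_add hB, Real.rpow_add hB,
        Real.rpow_one, Real.rpow_neg hB.le]
    have h1xrw : (1 - x) ^ (β - α - 1 - 1) =
        (1 - x) ^ β * ((1 - x) ^ α)⁻¹ * (((1 - x)) ^ (2:ℕ))⁻¹ := by
      rw [show β - α - 1 - 1 = β + (-α) + (-((2:ℕ):ℝ)) by push_cast; ring,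
        Real.rpow_add h1x, Real.rpow_add h1x, Real.rpow_neg h1x.le,
        Real.rpow_neg h1x.le, Real.rpow_natCast]
    simp only [smul_eq_mul, hg_def, e0, hfx, e1, e2, hBrw, h1xrw,
      show α + 1 - 1 = α by ring]
    have hxa : (0:ℝ) < (1 - x) ^ α := Real.rpow_pos_of_pos h1x α
    have hxb : (0:ℝ) < (1 - x) ^ β := Real.rpow_pos_of_pos h1x β
    have hBb : (0:ℝ) < B ^ β := Real.rpow_pos_of_pos hB β
    field_simp
  -- integrability of the beta integrand on (0,1)
  have hbeta_meas : Measurable fun x : ℝ => x ^ (α + 1 - 1) * (1 - x) ^ (β - α - 1 - 1) := by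
    fun_prop
  have hbeta_int : IntegrableOn
      (fun x => x ^ (α + 1 - 1) * (1 - x) ^ (β - α - 1 - 1)) (Set.Ioo (0:ℝ) 1) := by
    have h1 : IntervalIntegrable (fun x : ℝ => x ^ (β - α - 2)) volume 0 1 :=
      intervalIntegral.intervalIntegrable_rpow' hβ2
    have h2 := h1.comp_sub_left 1
    simp only [sub_zero, sub_self] at h2
    have h3 : IntegrableOn (fun x : ℝ => (1 - x) ^ (β - α - 2)) (Set.Ioc (0:ℝ) 1) := by
      simpa using (intervalIntegrable_iff_integrableOn_Ioc_of_le zero_le_one).mp h2.symm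
    refine Integrable.mono' (h3.mono_set Set.Ioo_subset_Ioc_self)
      hbeta_meas.aestronglyMeasurable ?_
    rw [ae_restrict_iff' measurableSet_Ioo]
    refine ae_of_all _ fun x hx => ?_
    have hx0 : (0:ℝ) < x := hx.1
    have h1x : (0:ℝ) < 1 - x := by linarith [hx.2]
    rw [Real.norm_eq_abs, abs_of_nonneg (by positivity),
      show β - α - 1 - 1 = β - α - 2 by ring]
    have hle : x ^ (α + 1 - 1) ≤ 1 := by
      rw [show α + 1 - 1 = α by ring]
      exact Real.rpow_le_one hx0.le (by linarith [hx.2]) hα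
    nlinarith [Real.rpow_pos_of_pos h1x (β - α - 2),
      Real.rpow_nonneg hx0.le (α + 1 - 1)]
  -- integrability of g on (0, ∞)
  have hgint : IntegrableOn g (Set.Ioi (0:ℝ)) := by
    rw [← himg, integrableOn_image_iff_integrableOn_abs_deriv_smul hs hderiv hinj]
    exact IntegrableOn.congr_fun (hbeta_int.const_mul (B ^ (α + 1 - β))) hpt.symm hs
  -- value of the integral of g on (0, ∞)
  have hIoi : ∫ A in Set.Ioi (0:ℝ), g A
      = B ^ (α + 1 - β) * (Real.Gamma (α + 1) * Real.Gamma (β - α - 1) / Real.Gamma β) := by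
    rw [← himg, integral_image_eq_integral_abs_deriv_smul hs hderiv hinj g,
      setIntegral_congr_fun hs hpt, integral_const_mul,
      real_beta_integral (by linarith : (0:ℝ) < α + 1) (by linarith : (0:ℝ) < β - α - 1),
      show α + 1 + (β - α - 1) = β by ring]
  -- pointwise comparison on (0,1)
  have hle : ∀ A ∈ Set.Ioo (0:ℝ) 1, A ^ α * (1 - A) ^ α / (A + B) ^ β ≤ g A := by
    intro A hA
    have hA0 : (0:ℝ) < A := hA.1
    have h1A : (0:ℝ) < 1 - A := by linarith [hA.2]
    have hAB : (0:ℝ) < A + B := by linarith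
    have h1 : (1 - A) ^ α ≤ 1 := Real.rpow_le_one h1A.le (by linarith) hα
    have hABβ : (0:ℝ) < (A + B) ^ β := Real.rpow_pos_of_pos hAB β
    have hgA : g A = A ^ α * 1 / (A + B) ^ β := by
      simp only [hg_def, Real.rpow_neg hAB.le, mul_one, div_eq_mul_inv]
    rw [hgA]
    gcongr
  have hg0' : ∀ᵐ A ∂volume.restrict (Set.Ioi (0:ℝ)), 0 ≤ g A := by
    rw [ae_restrict_iff' measurableSet_Ioi]
    refine ae_of_all _ fun A hA => ?_
    have hA0 : (0:ℝ) < A := Set.mem_Ioi.mp hA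
    exact mul_nonneg (Real.rpow_nonneg hA0.le α)
      (Real.rpow_nonneg (by linarith : (0:ℝ) ≤ A + B) _)
  have hfmeas : Measurable fun A : ℝ => A ^ α * (1 - A) ^ α / (A + B) ^ β := by fun_prop
  have hfint : IntegrableOn (fun A => A ^ α * (1 - A) ^ α / (A + B) ^ β)
      (Set.Ioo (0:ℝ) 1) := by
    refine Integrable.mono' (hgint.mono_set fun x hx => hx.1)
      hfmeas.aestronglyMeasurable ?_
    rw [ae_restrict_iff' hs]
    refine ae_of_all _ fun A hA => ?_
    have hA0 : (0:ℝ) < A := hA.1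
    have h1A : (0:ℝ) < 1 - A := by linarith [hA.2]
    have hAB : (0:ℝ) < A + B := by linarith
    rw [Real.norm_eq_abs, abs_of_nonneg (div_nonneg
      (mul_nonneg (Real.rpow_nonneg hA0.le α) (Real.rpow_nonneg h1A.le α))
      (Real.rpow_nonneg hAB.le β))]
    exact hle A hA
  calc ∫ A in Set.Ioo (0:ℝ) 1, A ^ α * (1 - A) ^ α / (A + B) ^ β
      ≤ ∫ A in Set.Ioo (0:ℝ) 1, g A :=
        setIntegral_mono_on hfint (hgint.mono_set fun x hx => hx.1) hs hle
    _ ≤ ∫ A in Set.Ioi (0:ℝ), g A :=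
        setIntegral_mono_set hgint hg0'
          (HasSubset.Subset.eventuallyLE fun x hx => hx.1)
    _ = Real.Gamma (α + 1) * Real.Gamma (β - α - 1) / Real.Gamma β * B ^ (-(β - α - 1)) := by
        rw [hIoi, show -(β - α - 1) = α + 1 - β by ring]
        ring
end
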